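/- Let G be a connected finite simple graph on the vertex set {1,…,n} with m edges. Then ara_A(J_G) = m, where ara_A(J_G) is the smallest integer s for which there exist A-homogeneous polynomials F_1,…,F_s ∈ J_G with rad(J_G) = rad((F_1,…,F_s)). -/

import Mathlib

open MvPolynomial

noncomputable section

/-- `f_{pq} = x_p · x_{n+q} − x_q · x_{n+p}` in `K[x_1,…,x_{2n}]`, where the first `n`
variables are indexed by `Fin.castAdd n` and the last `n` variables by `Fin.natAdd n`. -/
def edgeBinomial (K : Type*) [Field K] (n : ℕ) (p q : Fin n) :
    MvPolynomial (Fin (n + n)) K :=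
  X (Fin.castAdd n p) * X (Fin.natAdd n q) - X (Fin.castAdd n q) * X (Fin.natAdd n p)

/-- The binomial edge ideal `J_G` of a graph `G` on the vertex set `{1,…,n}`. -/
def binomialEdgeIdeal (K : Type*) [Field K] {n : ℕ} (G : SimpleGraph (Fin n)) :
    Ideal (MvPolynomial (Fin (n + n)) K) :=
  Ideal.span {f | ∃ p q : Fin n, p < q ∧ G.Adj p q ∧ f = edgeBinomial K n p q}

/-- A binomial is a difference of two monomials. -/
def IsBinomial {K : Type*} [Field K] {m : ℕ} (f : MvPolynomial (Fin m) K) : Prop :=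
  ∃ u v : Fin m →₀ ℕ, f = monomial u (1 : K) - monomial v 1

/-- The arithmetical rank: the smallest `s` such that there are `s` polynomials in `I`
generating `I` up to radical. -/
def ara {K : Type*} [Field K] {m : ℕ} (I : Ideal (MvPolynomial (Fin m) K)) : ℕ :=
  sInf {s | ∃ F : Fin s → MvPolynomial (Fin m) K,
    (∀ i, F i ∈ I) ∧ (Ideal.span (Set.range F)).radical = I.radical}

/-- The binomial arithmetical rank: the smallest `s` such that there are `s` binomials in `I`
generating `I` up to radical. -/
def bar {K : Type*} [Field K] {m : ℕ} (I : Ideal (MvPolynomial (Fin m) K)) : ℕ :=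
  sInf {s | ∃ B : Fin s → MvPolynomial (Fin m) K,
    (∀ i, IsBinomial (B i)) ∧ (∀ i, B i ∈ I) ∧
    (Ideal.span (Set.range B)).radical = I.radical}

/-- The `A`-degree of an exponent vector `u ∈ ℕ^{2n}`:
`deg_A(x^u) = (u_1 + u_{n+1}, …, u_n + u_{2n}) ∈ ℕ^n`. -/
def degA (n : ℕ) (u : Fin (n + n) →₀ ℕ) : Fin n → ℕ :=
  fun i => u (Fin.castAdd n i) + u (Fin.natAdd n i)

/-- A polynomial is `A`-homogeneous if all monomials occurring in it with nonzero
coefficient have the same `A`-degree. -/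
def IsAHomogeneous {K : Type*} [Field K] {n : ℕ} (F : MvPolynomial (Fin (n + n)) K) : Prop :=
  ∀ u ∈ F.support, ∀ v ∈ F.support, degA n u = degA n v

/-- The `A`-homogeneous arithmetical rank. -/
def araA {K : Type*} [Field K] {n : ℕ} (I : Ideal (MvPolynomial (Fin (n + n)) K)) : ℕ :=
  sInf {s | ∃ F : Fin s → MvPolynomial (Fin (n + n)) K,
    (∀ i, F i ∈ I ∧ IsAHomogeneous (F i)) ∧
    (Ideal.span (Set.range F)).radical = I.radical}


/-! The edge binomials are `A`-homogeneous and generate `J_G`, so `ara_A(J_G) ≤ m`.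
Conversely, `J_G` lies in the monomial ideal generated by the monomials involving two distinct
vertices, hence so does every monomial of every element of `J_G`. Let `F_1, …, F_s` generate
`J_G` up to radical. For an edge `{p, q}`, evaluating at the point `x_p = y_q = 1` (all other
variables `0`), where `f_pq = 1`, shows that some `F_i` has a monomial in `x_p, y_q` alone; that
monomial involves both, so the `A`-degree of `F_i` has support exactly `{p, q}`. By
`A`-homogeneity the edge is therefore determined by `i`, and `s ≥ m`. -/

open Finset

def spreadExponents (n : ℕ) : Set (Fin (n + n) →₀ ℕ) :=
  {u | ∃ i j, i ≠ j ∧ degA n u i ≠ 0 ∧ degA n u j ≠ 0}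

section ADegree

variable {n : ℕ}

lemma degA_add (u v : Fin (n + n) →₀ ℕ) : degA n (u + v) = degA n u + degA n v := by
  ext r
  simp only [degA, Finsupp.add_apply, Pi.add_apply]
  ring

lemma Fin.castAdd_ne_natAdd (p r : Fin n) : Fin.castAdd n p ≠ Fin.natAdd n r := by
  simp only [ne_eq, Fin.ext_iff, Fin.val_castAdd, Fin.val_natAdd]
  omega

lemma degA_single_castAdd (p : Fin n) (k : ℕ) :
    degA n (Finsupp.single (Fin.castAdd n p) k) = Pi.single p k := by
  ext r
  rw [degA, Finsupp.single_apply_left (Fin.castAdd_injective n n),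
    Finsupp.single_eq_of_ne (Fin.castAdd_ne_natAdd p r).symm, add_zero,
    Finsupp.single_eq_pi_single]

lemma degA_single_natAdd (p : Fin n) (k : ℕ) :
    degA n (Finsupp.single (Fin.natAdd n p) k) = Pi.single p k := by
  ext r
  rw [degA, Finsupp.single_apply_left (Fin.natAdd_injective n n),
    Finsupp.single_eq_of_ne (Fin.castAdd_ne_natAdd r p), zero_add,
    Finsupp.single_eq_pi_single]

lemma degA_mono {u v : Fin (n + n) →₀ ℕ} (h : u ≤ v) : degA n u ≤ degA n v :=
  fun _ => add_le_add (h _) (h _)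

lemma degA_ne_zero_iff_of_mem_spreadExponents {u : Fin (n + n) →₀ ℕ} (hu : u ∈ spreadExponents n)
    {p q : Fin n} (h : ∀ r, degA n u r ≠ 0 → r = p ∨ r = q) (r : Fin n) :
    degA n u r ≠ 0 ↔ r = p ∨ r = q := by
  obtain ⟨i, j, hij, hi, hj⟩ := hu
  refine ⟨h r, ?_⟩
  rcases h i hi with rfl | rfl <;> rcases h j hj with rfl | rfl <;> grind

end ADegree

lemma MvPolynomial.exists_mem_support_forall_ne_zero_of_eval_ne_zero {σ R : Type*} [CommRing R]
    {F : MvPolynomial σ R} {ζ : σ → R} (h : eval ζ F ≠ 0) :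
    ∃ u ∈ F.support, ∀ j, u j ≠ 0 → ζ j ≠ 0 := by
  by_contra! hF
  refine h (Ideal.span_le.mpr ?_ (mem_ideal_span_X_image.mpr fun u hu =>
    (hF u hu).imp fun _ hj => ⟨hj.2, hj.1⟩) : F ∈ RingHom.ker (eval ζ))
  rintro _ ⟨j, hj, rfl⟩
  rwa [SetLike.mem_coe, RingHom.mem_ker, eval_X]

lemma exists_map_ne_zero_of_mem_radical_span {R S ι : Type*} [CommRing R] [CommRing S]
    [IsReduced S] (φ : R →+* S) {F : ι → R} {f : R}
    (hf : f ∈ (Ideal.span (Set.range F)).radical) (hφf : φ f ≠ 0) : ∃ i, φ (F i) ≠ 0 := by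
  by_contra! hF
  obtain ⟨k, hk⟩ := hf
  have hker : Ideal.span (Set.range F) ≤ RingHom.ker φ := by
    rw [Ideal.span_le]
    rintro _ ⟨i, rfl⟩
    exact hF i
  exact hφf (IsNilpotent.eq_zero ⟨k, by rw [← map_pow]; exact hker hk⟩)

section BinomialEdgeIdeal

variable {K : Type*} [Field K] {n : ℕ}

lemma edgeBinomial_eq_monomial_sub_monomial (p q : Fin n) :
    edgeBinomial K n p q =
      monomial (Finsupp.single (Fin.castAdd n p) 1 + Finsupp.single (Fin.natAdd n q) 1) 1 -
        monomial (Finsupp.single (Fin.castAdd n q) 1 + Finsupp.single (Fin.natAdd n p) 1) 1 := by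
  simp only [edgeBinomial, X, monomial_mul, mul_one]

lemma edgeBinomial_swap (p q : Fin n) : edgeBinomial K n q p = -edgeBinomial K n p q := by
  simp only [edgeBinomial, neg_sub]

lemma isAHomogeneous_edgeBinomial (p q : Fin n) : IsAHomogeneous (edgeBinomial K n p q) := by
  classical
  have hsupp : ∀ u ∈ (edgeBinomial K n p q).support, degA n u = Pi.single p 1 + Pi.single q 1 := by
    intro u hu
    rw [edgeBinomial_eq_monomial_sub_monomial] at hu
    have hu' := support_sub _ _ _ hu
    simp only [support_monomial, one_ne_zero, if_false, Finset.mem_union,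
      Finset.mem_singleton] at hu'
    rcases hu' with rfl | rfl <;>
      simp only [degA_add, degA_single_castAdd, degA_single_natAdd, add_comm]
  intro u hu v hv
  rw [hsupp u hu, hsupp v hv]

lemma edgeBinomial_mem_span_spreadExponents {p q : Fin n} (hpq : p ≠ q) :
    edgeBinomial K n p q ∈ Ideal.span ((fun u => monomial u (1 : K)) '' spreadExponents n) := by
  rw [edgeBinomial_eq_monomial_sub_monomial]
  refine sub_mem (Ideal.subset_span ⟨_, ⟨p, q, hpq, ?_, ?_⟩, rfl⟩)
    (Ideal.subset_span ⟨_, ⟨p, q, hpq, ?_, ?_⟩, rfl⟩) <;>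
    simp only [degA_add, degA_single_castAdd, degA_single_natAdd, Pi.add_apply,
      Pi.single_eq_same, Pi.single_eq_of_ne hpq, Pi.single_eq_of_ne hpq.symm] <;> norm_num

variable {G : SimpleGraph (Fin n)}

lemma edgeBinomial_mem_binomialEdgeIdeal {p q : Fin n} (h : G.Adj p q) :
    edgeBinomial K n p q ∈ binomialEdgeIdeal K G := by
  rcases h.ne.lt_or_gt with hlt | hgt
  · exact Ideal.subset_span ⟨p, q, hlt, h, rfl⟩
  · rw [edgeBinomial_swap]
    exact neg_mem (Ideal.subset_span ⟨q, p, hgt, h.symm, rfl⟩)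

lemma binomialEdgeIdeal_le_span_spreadExponents :
    binomialEdgeIdeal K G ≤ Ideal.span ((fun u => monomial u (1 : K)) '' spreadExponents n) := by
  rw [binomialEdgeIdeal, Ideal.span_le]
  rintro _ ⟨p, q, hpq, -, rfl⟩
  exact edgeBinomial_mem_span_spreadExponents hpq.ne

lemma mem_spreadExponents_of_mem_support {F : MvPolynomial (Fin (n + n)) K}
    (hF : F ∈ binomialEdgeIdeal K G) {u : Fin (n + n) →₀ ℕ} (hu : u ∈ F.support) :
    u ∈ spreadExponents n := by
  obtain ⟨v, ⟨i, j, hij, hi, hj⟩, hvu⟩ :=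
    mem_ideal_span_monomial_image.mp (binomialEdgeIdeal_le_span_spreadExponents hF) u hu
  exact ⟨i, j, hij, fun h => hi (Nat.eq_zero_of_le_zero (h ▸ degA_mono hvu i)),
    fun h => hj (Nat.eq_zero_of_le_zero (h ▸ degA_mono hvu j))⟩

lemma eval_append_single_edgeBinomial {p q : Fin n} (hpq : p ≠ q) :
    eval (Fin.append (Pi.single p 1) (Pi.single q 1)) (edgeBinomial K n p q) = 1 := by
  simp only [edgeBinomial, map_sub, map_mul, eval_X, Fin.append_left, Fin.append_right,
    Pi.single_eq_same, Pi.single_eq_of_ne hpq, Pi.single_eq_of_ne hpq.symm, mul_one, zero_mul,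
    sub_zero]

lemma eq_or_eq_of_degA_ne_zero {R : Type*} [Zero R] [One R] {u : Fin (n + n) →₀ ℕ} {p q : Fin n}
    (hu : ∀ j, u j ≠ 0 → Fin.append (Pi.single p (1 : R)) (Pi.single q 1) j ≠ 0) (r : Fin n)
    (hr : degA n u r ≠ 0) : r = p ∨ r = q := by
  have hx := hu (Fin.castAdd n r)
  have hy := hu (Fin.natAdd n r)
  simp only [Fin.append_left, Fin.append_right, ne_eq, Pi.single_apply] at hx hy
  unfold degA at hr
  grind

lemma exists_mem_support_degA_ne_zero_iff {s : ℕ} {F : Fin s → MvPolynomial (Fin (n + n)) K}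
    (hF : ∀ i, F i ∈ binomialEdgeIdeal K G)
    (hrad : (Ideal.span (Set.range F)).radical = (binomialEdgeIdeal K G).radical)
    {e : Sym2 (Fin n)} (he : e ∈ G.edgeSet) :
    ∃ i, ∃ u ∈ (F i).support, ∀ r, degA n u r ≠ 0 ↔ r ∈ e := by
  induction e using Sym2.ind with | _ p q
  have hpq : p ≠ q := G.ne_of_adj he
  have hf : edgeBinomial K n p q ∈ (Ideal.span (Set.range F)).radical :=
    hrad ▸ Ideal.le_radical (edgeBinomial_mem_binomialEdgeIdeal he)
  obtain ⟨i, hi⟩ := exists_map_ne_zero_of_mem_radical_span _ hf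
    ((eval_append_single_edgeBinomial hpq).trans_ne one_ne_zero)
  obtain ⟨u, hu, hζu⟩ := exists_mem_support_forall_ne_zero_of_eval_ne_zero hi
  refine ⟨i, u, hu, fun r => ?_⟩
  rw [Sym2.mem_iff]
  exact degA_ne_zero_iff_of_mem_spreadExponents (mem_spreadExponents_of_mem_support (hF i) hu)
    (eq_or_eq_of_degA_ne_zero hζu) r

lemma card_edgeFinset_le_of_radical_eq [DecidableRel G.Adj] {s : ℕ}
    {F : Fin s → MvPolynomial (Fin (n + n)) K}
    (hF : ∀ i, F i ∈ binomialEdgeIdeal K G ∧ IsAHomogeneous (F i))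
    (hrad : (Ideal.span (Set.range F)).radical = (binomialEdgeIdeal K G).radical) :
    #G.edgeFinset ≤ s := by
  choose i u hu hdeg using fun e : G.edgeSet =>
    exists_mem_support_degA_ne_zero_iff (fun i => (hF i).1) hrad e.2
  have hinj : Function.Injective i := by
    intro e e' h
    have hsame : degA n (u e) = degA n (u e') := (hF (i e)).2 _ (hu e) _ (h ▸ hu e')
    exact Subtype.ext (Sym2.ext fun r => by rw [← hdeg, ← hdeg, hsame])
  simpa [SimpleGraph.edgeFinset_card] using Fintype.card_le_of_injective i hinj

lemma binomialEdgeIdeal_eq_span_image :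
    binomialEdgeIdeal K G =
      Ideal.span ((fun e : Sym2 (Fin n) => edgeBinomial K n e.inf e.sup) '' G.edgeSet) := by
  refine le_antisymm (Ideal.span_le.mpr ?_) (Ideal.span_le.mpr ?_)
  · rintro _ ⟨p, q, hpq, hadj, rfl⟩
    refine Ideal.subset_span ⟨s(p, q), hadj, ?_⟩
    simp [hpq.le]
  · rintro _ ⟨e, he, rfl⟩
    rw [← Sym2.sortEquiv.symm_apply_apply e] at he
    exact edgeBinomial_mem_binomialEdgeIdeal he

lemma exists_isAHomogeneous_span_eq_binomialEdgeIdeal [DecidableRel G.Adj] :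
    ∃ F : Fin #G.edgeFinset → MvPolynomial (Fin (n + n)) K,
      (∀ i, F i ∈ binomialEdgeIdeal K G ∧ IsAHomogeneous (F i)) ∧
      Ideal.span (Set.range F) = binomialEdgeIdeal K G := by
  let E := G.edgeFinset.equivFin.symm
  refine ⟨fun i => edgeBinomial K n (E i).1.inf (E i).1.sup, fun i => ⟨?_, ?_⟩, ?_⟩
  · rw [binomialEdgeIdeal_eq_span_image]
    exact Ideal.subset_span ⟨_, G.mem_edgeFinset.mp (E i).2, rfl⟩
  · exact isAHomogeneous_edgeBinomial _ _
  · rw [binomialEdgeIdeal_eq_span_image, ← SimpleGraph.coe_edgeFinset, Set.image_eq_range]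
    exact congrArg Ideal.span
      (E.surjective.range_comp fun e : G.edgeFinset => edgeBinomial K n e.1.inf e.1.sup)

end BinomialEdgeIdeal

theorem stmt_6_general (K : Type*) [Field K] (n : ℕ)
    (G : SimpleGraph (Fin n)) [DecidableRel G.Adj]
    (m : ℕ) (hm : G.edgeFinset.card = m) :
    araA (binomialEdgeIdeal K G) = m := by
  subst hm
  obtain ⟨F, hF, hspan⟩ := exists_isAHomogeneous_span_eq_binomialEdgeIdeal (K := K) (G := G)
  refine le_antisymm (Nat.sInf_le ⟨F, hF, by rw [hspan]⟩) ?_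
  exact le_csInf ⟨_, F, hF, by rw [hspan]⟩ fun s ⟨F', hF', hrad⟩ =>
    card_edgeFinset_le_of_radical_eq hF' hrad

theorem stmt_6 (K : Type*) [Field K] (n : ℕ) (hn : 0 < n)
    (G : SimpleGraph (Fin n)) [DecidableRel G.Adj] (hconn : G.Connected)
    (m : ℕ) (hm : G.edgeFinset.card = m) :
    araA (binomialEdgeIdeal K G) = m :=
  stmt_6_general K n G m hm
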